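/- Let d > 1 be a real number. The function ν ↦ h₂(ν,d) is strictly decreasing on (0,∞): for all real 0 < ν₁ < ν₂, h₂(ν₂,d) < h₂(ν₁,d). -/

import Mathlib

/-! `h₂` is `1/(1 + √(1 + 4(d−1)r²)) − 1/2` with `r = ν/(ν+1)` (rationalize `(√(1+t) − 1)/t`),
and `r` increases with `ν`. -/

/-- `h₁(ν,d) = (ν+1)² + 4ν²(d−1)`. -/
noncomputable def h1 (ν d : ℝ) : ℝ := (ν + 1) ^ 2 + 4 * ν ^ 2 * (d - 1)

/-- `h₂(ν,d) = ((ν+1)·√(h₁(ν,d)) − (ν+1)²)/(4ν²(d−1)) − 1/2`. -/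
noncomputable def h2 (ν d : ℝ) : ℝ :=
  ((ν + 1) * Real.sqrt (h1 ν d) - (ν + 1) ^ 2) / (4 * ν ^ 2 * (d - 1)) - 1 / 2

/-- `g₁(ν,α,d) = (ν + 1 + (d−1)·α·ν)·exp(−(ν² + (d−1)·α²)/2)`. -/
noncomputable def g1 (ν α d : ℝ) : ℝ :=
  (ν + 1 + (d - 1) * α * ν) * Real.exp (-(ν ^ 2 + (d - 1) * α ^ 2) / 2)

/-- `g₂(ν,d) = ((ν + 1 + √(h₁(ν,d)))/2)·exp(−ν²/2 + h₂(ν,d))`. -/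
noncomputable def g2 (ν d : ℝ) : ℝ :=
  ((ν + 1 + Real.sqrt (h1 ν d)) / 2) * Real.exp (-ν ^ 2 / 2 + h2 ν d)

theorem sqrt_one_add_sub_one_div {t : ℝ} (ht : -1 ≤ t) (ht0 : t ≠ 0) :
    (√(1 + t) - 1) / t = 1 / (1 + √(1 + t)) := by
  have hsq : √(1 + t) ^ 2 = 1 + t := Real.sq_sqrt (by linarith)
  have hpos : 0 < 1 + √(1 + t) := by positivity
  rw [div_eq_div_iff ht0 hpos.ne']
  linear_combination hsq

theorem div_add_one_lt_div_add_one {a b : ℝ} (ha : 0 ≤ a) (hab : a < b) :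
    a / (a + 1) < b / (b + 1) := by
  rw [div_lt_div_iff₀ (by linarith) (by linarith)]
  linarith

theorem h1_eq_sq_mul (ν d : ℝ) (hν : ν + 1 ≠ 0) :
    h1 ν d = (ν + 1) ^ 2 * (1 + 4 * (d - 1) * (ν / (ν + 1)) ^ 2) := by
  rw [h1]
  field_simp

theorem h2_eq_of_pos {ν d : ℝ} (hν : 0 < ν) (hd : 1 < d) :
    h2 ν d = 1 / (1 + √(1 + 4 * (d - 1) * (ν / (ν + 1)) ^ 2)) - 1 / 2 := by
  have hν1 : 0 < ν + 1 := by linarith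
  have ht : 0 < 4 * (d - 1) * (ν / (ν + 1)) ^ 2 := by
    have : 0 < d - 1 := by linarith
    positivity
  rw [← sqrt_one_add_sub_one_div (by linarith) ht.ne', h2, h1_eq_sq_mul ν d hν1.ne',
    Real.sqrt_mul (by positivity), Real.sqrt_sq hν1.le]
  congr 1
  field_simp

theorem strictAntiOn_h2 {d : ℝ} (hd : 1 < d) : StrictAntiOn (fun ν ↦ h2 ν d) (Set.Ioi 0) := by
  intro a (ha : 0 < a) b (hb : 0 < b) hab
  have hd1 : 0 < d - 1 := by linarith
  have hr := div_add_one_lt_div_add_one ha.le hab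
  simp only [h2_eq_of_pos ha hd, h2_eq_of_pos hb hd]
  gcongr

/-- For real `d > 1`, the function `ν ↦ h₂(ν,d)` is strictly decreasing on `(0,∞)`. -/
theorem stmt_10 (d : ℝ) (hd : 1 < d) (ν₁ ν₂ : ℝ) (h₀ : 0 < ν₁) (h₁₂ : ν₁ < ν₂) :
    h2 ν₂ d < h2 ν₁ d :=
  strictAntiOn_h2 hd h₀ (h₀.trans h₁₂) h₁₂
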